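/- Let ρ be a critical radius function on ℝ^d, 0 < α < d and θ ≥ 0. Suppose (p_t)_{t>0} is a measurable family of nonnegative kernels on ℝ^d × ℝ^d such that for some N > d − α + θ there is a constant C_N with p_t(x,y) ≤ C_N t^{−d/2} exp(−|x−y|²/(5t))(1 + √t/ρ(x))^{−N} for all t, x, y. Then there is a constant C, depending only on d, α, θ, N and C_N, such that for every locally integrable f and every x ∈ ℝ^d, ∫_0^∞ ∫_{ℝ^d \ B(x,ρ(x))} p_t(x,y) |f(y)| dy · t^{α/2−1} dt ≤ C · M_α^{ρ,θ} f(x). -/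

import Mathlib

open MeasureTheory Set Real ENNReal

noncomputable section

/-- `ℝ^d` with the Euclidean distance. -/
abbrev Ed (d : ℕ) : Type := EuclideanSpace ℝ (Fin d)

/-- The axis-parallel cube `Q(c, r)` with center `c` and side length `r`;
its Lebesgue measure `|Q|` is `r ^ d`. -/
def cube {d : ℕ} (c : Ed d) (r : ℝ) : Set (Ed d) := {y | ∀ i, |y i - c i| ≤ r / 2}

/-- `ψ_θ(Q) = (1 + r_Q / ρ(x_Q))^θ` for the cube with center `c` and side length `r`. -/
def psi {d : ℕ} (ρ : Ed d → ℝ) (θ : ℝ) (c : Ed d) (r : ℝ) : ℝ := (1 + r / ρ c) ^ θ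

/-- A critical radius function with constants `C₀ ≥ 1`, `N₀ > 0`. -/
structure IsCriticalRadius {d : ℕ} (ρ : Ed d → ℝ) (C₀ N₀ : ℝ) : Prop where
  one_le_C₀ : 1 ≤ C₀
  N₀_pos : 0 < N₀
  pos : ∀ x, 0 < ρ x
  lower : ∀ x y, C₀⁻¹ * ρ x * (1 + dist x y / ρ x) ^ (-N₀) ≤ ρ y
  upper : ∀ x y, ρ y ≤ C₀ * ρ x * (1 + dist x y / ρ x) ^ (N₀ / (N₀ + 1))

/-- A weight: measurable, a.e. positive (hence a.e. finite) and locally integrable. -/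
def IsWeight {d : ℕ} (ω : Ed d → ℝ) : Prop :=
  Measurable ω ∧ (∀ᵐ x ∂(volume : Measure (Ed d)), 0 < ω x) ∧ LocallyIntegrable ω

/-- The fractional maximal operator `M_α^{ρ,θ} f(x) =
`sup_{Q ∋ x} (ψ_θ(Q) |Q|^{1-α/d})⁻¹ ∫_Q |f|`, with values in `ℝ≥0∞`.
`M^{ρ,θ}` is `Mfrac ρ θ 0`. -/
def Mfrac {d : ℕ} (ρ : Ed d → ℝ) (θ α : ℝ) (f : Ed d → ℝ) (x : Ed d) : ℝ≥0∞ :=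
  ⨆ (c : Ed d) (r : ℝ) (_ : 0 < r) (_ : x ∈ cube c r),
    ENNReal.ofReal ((psi ρ θ c r * (r ^ (d : ℝ)) ^ (1 - α / d))⁻¹ * ∫ y in cube c r, |f y|)

/-!
Split the complement of `B(x, ρ(x))` into the dyadic annuli `2ᵏρ(x) ≤ |x - y| < 2ᵏ⁺¹ρ(x)`; the
`k`-th one lies in the cube `Q_k` of side `2ᵏ⁺²ρ(x)` centred at `x`; there the kernel is at most
its Gaussian bound at radius `2ᵏρ(x)`, and `∫_{Q_k} |f| ≤ ψ_θ(Q_k) |Q_k|^{1-α/d} M_α^{ρ,θ} f(x)`.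
Trading the Gaussian for a power, `e^{-u} ≤ C_m u^{-m}`, bounds the time integral on the `k`-th
annulus by `C (2ᵏρ)^{-2m} ρ^{2γ}` with `γ = m - (d - α)/2`; it converges at `t → ∞` thanks to
`(1 + √t/ρ)^{-N}` as long as `2γ < N`. For `θ < 2γ` the `k`-th term is then
`O(2^{k(θ - 2γ)})`, a convergent geometric series.
-/

def heatKernelBound (d N CN ρ t r : ℝ) : ℝ :=
  CN * t ^ (-d / 2) * Real.exp (-r ^ 2 / (5 * t)) * (1 + √t / ρ) ^ (-N)

theorem heatKernelBound_nonneg {d N CN ρ t : ℝ} (r : ℝ) (hCN : 0 ≤ CN) (hρ : 0 < ρ)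
    (ht : 0 ≤ t) : 0 ≤ heatKernelBound d N CN ρ t r := by
  unfold heatKernelBound
  have := Real.rpow_nonneg ht (-d / 2)
  have := Real.rpow_nonneg (by positivity : 0 ≤ 1 + √t / ρ) (-N)
  positivity

theorem heatKernelBound_le_of_le {d N CN ρ t r s : ℝ} (hCN : 0 ≤ CN) (hρ : 0 < ρ) (ht : 0 < t)
    (hr : 0 ≤ r) (hrs : r ≤ s) : heatKernelBound d N CN ρ t s ≤ heatKernelBound d N CN ρ t r := by
  unfold heatKernelBound
  have := Real.rpow_nonneg ht.le (-d / 2)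
  have := Real.rpow_nonneg (by positivity : 0 ≤ 1 + √t / ρ) (-N)
  gcongr

theorem measurable_heatKernelBound (d N CN ρ r : ℝ) :
    Measurable fun t => heatKernelBound d N CN ρ t r := by
  unfold heatKernelBound
  fun_prop

theorem exp_neg_le_mul_rpow_neg {m u : ℝ} (hm : 0 < m) (hu : 0 < u) :
    Real.exp (-u) ≤ Real.exp (m * (Real.log m - 1)) * u ^ (-m) := by
  rw [Real.rpow_def_of_pos hu, ← Real.exp_add, Real.exp_le_exp]
  have h := Real.log_le_sub_one_of_pos (show 0 < u / m by positivity)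
  rw [Real.log_div hu.ne' hm.ne', le_sub_iff_add_le, le_div_iff₀ hm] at h
  nlinarith

theorem lintegral_Ioc_rpow_sub_one {γ T : ℝ} (hγ : 0 < γ) (hT : 0 ≤ T) :
    ∫⁻ t in Ioc 0 T, ENNReal.ofReal (t ^ (γ - 1)) = ENNReal.ofReal (T ^ γ / γ) := by
  have hi : IntegrableOn (fun t : ℝ => t ^ (γ - 1)) (Ioc 0 T) := by
    rw [← intervalIntegrable_iff_integrableOn_Ioc_of_le hT]
    exact intervalIntegral.intervalIntegrable_rpow' (by linarith)
  rw [← ofReal_integral_eq_lintegral_ofReal hi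
    (ae_restrict_of_forall_mem measurableSet_Ioc fun t ht => Real.rpow_nonneg ht.1.le _),
    ← intervalIntegral.integral_of_le hT, integral_rpow (Or.inl (by linarith)),
    sub_add_cancel, Real.zero_rpow hγ.ne', sub_zero]

theorem lintegral_Ioi_rpow_sub_one {δ T : ℝ} (hδ : δ < 0) (hT : 0 < T) :
    ∫⁻ t in Ioi T, ENNReal.ofReal (t ^ (δ - 1)) = ENNReal.ofReal (T ^ δ / (-δ)) := by
  rw [← ofReal_integral_eq_lintegral_ofReal
    (integrableOn_Ioi_rpow_of_lt (show δ - 1 < -1 by linarith) hT)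
    (ae_restrict_of_forall_mem measurableSet_Ioi fun t ht => Real.rpow_nonneg (hT.trans ht).le _),
    integral_Ioi_rpow_of_lt (by linarith) hT, sub_add_cancel, neg_div, div_neg]

theorem lintegral_rpow_mul_one_add_sqrt_div_rpow_le {γ N ρ : ℝ} (hγ : 0 < γ) (hγN : 2 * γ < N)
    (hρ : 0 < ρ) :
    ∫⁻ t in Ioi 0, ENNReal.ofReal (t ^ (γ - 1) * (1 + √t / ρ) ^ (-N)) ≤
      ENNReal.ofReal (ρ ^ (2 * γ) * (1 / γ + 2 / (N - 2 * γ))) := by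
  have hT : 0 < ρ ^ 2 := by positivity
  have hδ : γ - N / 2 < 0 := by linarith
  have hsmall : ∫⁻ t in Ioc 0 (ρ ^ 2), ENNReal.ofReal (t ^ (γ - 1) * (1 + √t / ρ) ^ (-N)) ≤
      ENNReal.ofReal (ρ ^ (2 * γ) * (1 / γ)) := by
    calc _ ≤ ∫⁻ t in Ioc 0 (ρ ^ 2), ENNReal.ofReal (t ^ (γ - 1)) := by
          refine setLIntegral_mono' measurableSet_Ioc fun t ht => ENNReal.ofReal_le_ofReal ?_
          refine mul_le_of_le_one_right (Real.rpow_nonneg ht.1.le _) ?_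
          exact Real.rpow_le_one_of_one_le_of_nonpos (by simp; positivity) (by linarith)
      _ = _ := by
          rw [lintegral_Ioc_rpow_sub_one hγ hT.le, ← Real.rpow_natCast, ← Real.rpow_mul hρ.le,
            mul_one_div]
          norm_num
  have hlarge : ∫⁻ t in Ioi (ρ ^ 2), ENNReal.ofReal (t ^ (γ - 1) * (1 + √t / ρ) ^ (-N)) ≤
      ENNReal.ofReal (ρ ^ (2 * γ) * (2 / (N - 2 * γ))) := by
    calc _ ≤ ∫⁻ t in Ioi (ρ ^ 2),
          ENNReal.ofReal (ρ ^ N) * ENNReal.ofReal (t ^ (γ - N / 2 - 1)) := by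
          refine setLIntegral_mono' measurableSet_Ioi fun t ht => ?_
          have ht0 : 0 < t := hT.trans ht
          rw [← ENNReal.ofReal_mul (by positivity)]
          refine ENNReal.ofReal_le_ofReal ?_
          calc t ^ (γ - 1) * (1 + √t / ρ) ^ (-N) ≤ t ^ (γ - 1) * (√t / ρ) ^ (-N) := by
                refine mul_le_mul_of_nonneg_left ?_ (Real.rpow_nonneg ht0.le _)
                exact Real.rpow_le_rpow_of_nonpos (by positivity) (by linarith) (by linarith)
            _ = ρ ^ N * t ^ (γ - N / 2 - 1) := by
                rw [Real.div_rpow (Real.sqrt_nonneg t) hρ.le, Real.sqrt_eq_rpow,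
                  ← Real.rpow_mul ht0.le, Real.rpow_neg hρ.le, div_inv_eq_mul,
                  show γ - N / 2 - 1 = (γ - 1) + 1 / 2 * -N by ring, Real.rpow_add ht0]
                ring
      _ = ENNReal.ofReal (ρ ^ N) * ENNReal.ofReal ((ρ ^ 2) ^ (γ - N / 2) / (-(γ - N / 2))) := by
          rw [lintegral_const_mul' _ _ ENNReal.ofReal_ne_top, lintegral_Ioi_rpow_sub_one hδ hT]
      _ = _ := by
          rw [← ENNReal.ofReal_mul (by positivity), ← Real.rpow_natCast, ← Real.rpow_mul hρ.le,
            mul_div_assoc', ← Real.rpow_add hρ,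
            show N + (2 : ℕ) * (γ - N / 2) = 2 * γ by push_cast; ring,
            show -(γ - N / 2) = (N - 2 * γ) / 2 by ring, div_div_eq_mul_div, mul_div_assoc]
  rw [← Ioc_union_Ioi_eq_Ioi hT.le, lintegral_union measurableSet_Ioi (Ioc_disjoint_Ioi le_rfl),
    mul_add, ENNReal.ofReal_add (by positivity) (by positivity)]
  exact add_le_add hsmall hlarge

theorem heatKernelBound_mul_rpow_le {d N CN ρ r α m γ t : ℝ} (hCN : 0 ≤ CN) (hm : 0 < m)
    (hmγ : -d / 2 + m + α / 2 = γ) (hρ : 0 < ρ) (hr : 0 < r) (ht : 0 < t) :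
    heatKernelBound d N CN ρ t r * t ^ (α / 2 - 1) ≤
      CN * Real.exp (m * (Real.log m - 1)) * 5 ^ m * r ^ (-(2 * m)) *
        (t ^ (γ - 1) * (1 + √t / ρ) ^ (-N)) := by
  have hexp : Real.exp (-r ^ 2 / (5 * t)) ≤
      Real.exp (m * (Real.log m - 1)) * (5 ^ m * r ^ (-(2 * m)) * t ^ m) := by
    convert exp_neg_le_mul_rpow_neg hm (by positivity : 0 < r ^ 2 / (5 * t)) using 2
    · ring
    · rw [Real.rpow_neg (x := r ^ 2 / (5 * t)) (by positivity), ← Real.inv_rpow (by positivity),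
        inv_div, Real.div_rpow (by positivity) (by positivity), Real.mul_rpow (by norm_num) ht.le,
        ← Real.rpow_natCast, ← Real.rpow_mul hr.le, Real.rpow_neg hr.le]
      push_cast
      ring
  have h1 := Real.rpow_nonneg ht.le (-d / 2)
  have h2 := Real.rpow_nonneg ht.le (α / 2 - 1)
  have h3 := Real.rpow_nonneg (by positivity : 0 ≤ 1 + √t / ρ) (-N)
  calc heatKernelBound d N CN ρ t r * t ^ (α / 2 - 1)
      ≤ CN * t ^ (-d / 2) * (Real.exp (m * (Real.log m - 1)) * (5 ^ m * r ^ (-(2 * m)) * t ^ m)) *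
          (1 + √t / ρ) ^ (-N) * t ^ (α / 2 - 1) := by
        unfold heatKernelBound
        gcongr
    _ = CN * Real.exp (m * (Real.log m - 1)) * 5 ^ m * r ^ (-(2 * m)) *
          ((t ^ (-d / 2) * t ^ m * t ^ (α / 2 - 1)) * (1 + √t / ρ) ^ (-N)) := by ring
    _ = _ := by rw [← Real.rpow_add ht, ← Real.rpow_add ht, ← hmγ]; ring_nf

theorem exists_lintegral_heatKernelBound_mul_rpow_le {d N CN α m γ : ℝ} (hCN : 0 < CN)
    (hm : 0 < m) (hγ : 0 < γ) (hγN : 2 * γ < N) (hmγ : -d / 2 + m + α / 2 = γ) :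
    ∃ A > 0, ∀ ρ r, 0 < ρ → 0 < r →
      ∫⁻ t in Ioi 0, ENNReal.ofReal (heatKernelBound d N CN ρ t r * t ^ (α / 2 - 1)) ≤
        ENNReal.ofReal (A * r ^ (-(2 * m)) * ρ ^ (2 * γ)) := by
  set B := CN * Real.exp (m * (Real.log m - 1)) * 5 ^ m
  have hB : 0 < B := by positivity
  have hN : 0 < N - 2 * γ := by linarith
  refine ⟨B * (1 / γ + 2 / (N - 2 * γ)), mul_pos hB (add_pos (by positivity) (by positivity)),
    fun ρ r hρ hr => ?_⟩
  calc _ ≤ ∫⁻ t in Ioi 0, ENNReal.ofReal (B * r ^ (-(2 * m))) *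
        ENNReal.ofReal (t ^ (γ - 1) * (1 + √t / ρ) ^ (-N)) := by
        refine setLIntegral_mono' measurableSet_Ioi fun t ht => ?_
        rw [← ENNReal.ofReal_mul (by positivity)]
        exact ENNReal.ofReal_le_ofReal (heatKernelBound_mul_rpow_le hCN.le hm hmγ hρ hr ht)
    _ ≤ ENNReal.ofReal (B * r ^ (-(2 * m))) *
        ENNReal.ofReal (ρ ^ (2 * γ) * (1 / γ + 2 / (N - 2 * γ))) := by
        rw [lintegral_const_mul' _ _ ENNReal.ofReal_ne_top]
        gcongr
        exact lintegral_rpow_mul_one_add_sqrt_div_rpow_le hγ hγN hρ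
    _ = _ := by rw [← ENNReal.ofReal_mul (by positivity)]; ring_nf

theorem self_mem_cube {d : ℕ} (c : Ed d) {r : ℝ} (hr : 0 ≤ r) : c ∈ cube c r := fun i => by
  rw [sub_self, abs_zero]
  positivity

theorem ball_subset_cube {d : ℕ} (c : Ed d) (r : ℝ) : Metric.ball c r ⊆ cube c (2 * r) := by
  intro y hy i
  have := PiLp.dist_apply_le y c i
  rw [Real.dist_eq] at this
  linarith [Metric.mem_ball.1 hy]

theorem isCompact_cube {d : ℕ} (c : Ed d) (r : ℝ) : IsCompact (cube c r) := by
  have : cube c r = EuclideanSpace.equiv (Fin d) ℝ ⁻¹'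
      univ.pi fun i => Icc (c i - r / 2) (c i + r / 2) := by
    ext y
    change (∀ i, |y i - c i| ≤ r / 2) ↔ ∀ i ∈ univ, y i ∈ Icc (c i - r / 2) (c i + r / 2)
    simp only [mem_univ, true_implies, abs_le, mem_Icc]
    exact forall_congr' fun i => by constructor <;> intro h <;> constructor <;> linarith [h.1, h.2]
  rw [this]
  exact (EuclideanSpace.equiv (Fin d) ℝ).toHomeomorph.isCompact_preimage.2
    (isCompact_univ_pi fun _ => isCompact_Icc)

theorem lintegral_cube_le_Mfrac {d : ℕ} {ρ : Ed d → ℝ} {f : Ed d → ℝ} (θ α : ℝ)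
    (hf : LocallyIntegrable f) {x c : Ed d} {r : ℝ} (hr : 0 < r) (hx : x ∈ cube c r)
    (hρc : 0 < ρ c) :
    ∫⁻ y in cube c r, ENNReal.ofReal |f y| ≤
      ENNReal.ofReal (psi ρ θ c r * (r ^ (d : ℝ)) ^ (1 - α / d)) * Mfrac ρ θ α f x := by
  set w := psi ρ θ c r * (r ^ (d : ℝ)) ^ (1 - α / d)
  have hw : 0 < w := by unfold w psi; positivity
  rw [← ofReal_integral_eq_lintegral_ofReal (hf.integrableOn_isCompact (isCompact_cube c r)).abs
    (.of_forall fun y => abs_nonneg _), ← mul_inv_cancel_left₀ hw.ne' (∫ y in cube c r, |f y|),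
    ENNReal.ofReal_mul hw.le]
  gcongr
  exact le_iSup_of_le c (le_iSup_of_le r (le_iSup_of_le hr (le_iSup_of_le hx le_rfl)))

def dyadicAnnulus {d : ℕ} (x : Ed d) (r : ℝ) (k : ℕ) : Set (Ed d) :=
  (Metric.ball x (2 ^ k * r))ᶜ ∩ Metric.ball x (2 * (2 ^ k * r))

theorem compl_ball_subset_iUnion_dyadicAnnulus {d : ℕ} (x : Ed d) {r : ℝ} (hr : 0 < r) :
    (Metric.ball x r)ᶜ ⊆ ⋃ k, dyadicAnnulus x r k := by
  intro y hy
  rw [mem_compl_iff, Metric.mem_ball, not_lt, ← one_le_div hr] at hy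
  obtain ⟨k, hk, hk'⟩ := exists_nat_pow_near hy one_lt_two
  rw [le_div_iff₀ hr] at hk
  rw [div_lt_iff₀ hr, pow_succ'] at hk'
  exact mem_iUnion.2 ⟨k, by simpa using hk, by simpa [mul_assoc] using hk'⟩

theorem setLIntegral_compl_ball_le_tsum_cube {d : ℕ} {x : Ed d} {r : ℝ} (hr : 0 < r)
    {F g : Ed d → ℝ≥0∞} {b : ℕ → ℝ≥0∞} (hb : ∀ k, b k ≠ ∞)
    (hF : ∀ k y, 2 ^ k * r ≤ dist y x → F y ≤ b k * g y) :
    ∫⁻ y in (Metric.ball x r)ᶜ, F y ≤ ∑' k, b k * ∫⁻ y in cube x (4 * (2 ^ k * r)), g y := by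
  calc ∫⁻ y in (Metric.ball x r)ᶜ, F y
      ≤ ∑' k, ∫⁻ y in dyadicAnnulus x r k, F y :=
        (lintegral_mono_set (compl_ball_subset_iUnion_dyadicAnnulus x hr)).trans
          (lintegral_iUnion_le _ _)
    _ ≤ ∑' k, b k * ∫⁻ y in cube x (4 * (2 ^ k * r)), g y := by
        refine ENNReal.tsum_le_tsum fun k => ?_
        rw [← lintegral_const_mul' _ _ (hb k)]
        calc _ ≤ ∫⁻ y in dyadicAnnulus x r k, b k * g y :=
              setLIntegral_mono' (measurableSet_ball.compl.inter measurableSet_ball)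
                fun y hy => hF k y (by simpa using hy.1)
          _ ≤ _ := lintegral_mono_set (inter_subset_right.trans
              ((ball_subset_cube x _).trans_eq (by ring_nf)))

theorem psi_mul_rpow_le {d : ℕ} {ρ : Ed d → ℝ} {x : Ed d} {θ α m γ s : ℝ} (hd : 0 < d)
    (hθ : 0 ≤ θ) (hmγ : -d / 2 + m + α / 2 = γ) (hρ : 0 < ρ x) (hs : 1 ≤ s) :
    psi ρ θ x (4 * (s * ρ x)) * ((4 * (s * ρ x)) ^ (d : ℝ)) ^ (1 - α / d) *
        ((s * ρ x) ^ (-(2 * m)) * ρ x ^ (2 * γ)) ≤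
      8 ^ θ * 4 ^ ((d : ℝ) - α) * s ^ (θ - 2 * γ) := by
  have hs0 : 0 < s := one_pos.trans_le hs
  have hpsi : psi ρ θ x (4 * (s * ρ x)) ≤ 8 ^ θ * s ^ θ := by
    rw [← Real.mul_rpow (by norm_num) hs0.le, psi, mul_div_assoc, mul_div_cancel_right₀ _ hρ.ne']
    exact Real.rpow_le_rpow (by positivity) (by linarith) hθ
  have hvol : ((4 * (s * ρ x)) ^ (d : ℝ)) ^ (1 - α / d) =
      4 ^ ((d : ℝ) - α) * s ^ ((d : ℝ) - α) * ρ x ^ ((d : ℝ) - α) := by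
    rw [← Real.rpow_mul (by positivity), mul_one_sub, mul_div_cancel₀ _ (by positivity),
      Real.mul_rpow (by norm_num) (by positivity), Real.mul_rpow hs0.le hρ.le, mul_assoc]
  have hexp : (d : ℝ) - α = 2 * m - 2 * γ := by linarith
  calc _ ≤ 8 ^ θ * s ^ θ * (4 ^ ((d : ℝ) - α) * s ^ ((d : ℝ) - α) * ρ x ^ ((d : ℝ) - α)) *
        ((s * ρ x) ^ (-(2 * m)) * ρ x ^ (2 * γ)) := by
        rw [hvol]
        gcongr
    _ = 8 ^ θ * 4 ^ ((d : ℝ) - α) * (s ^ θ * s ^ ((d : ℝ) - α) * s ^ (-(2 * m))) *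
        (ρ x ^ ((d : ℝ) - α) * ρ x ^ (-(2 * m)) * ρ x ^ (2 * γ)) := by
        rw [Real.mul_rpow hs0.le hρ.le]; ring
    _ = _ := by
        rw [← Real.rpow_add hs0, ← Real.rpow_add hs0, ← Real.rpow_add hρ, ← Real.rpow_add hρ,
          hexp, show θ + (2 * m - 2 * γ) + -(2 * m) = θ - 2 * γ by ring,
          show 2 * m - 2 * γ + -(2 * m) + 2 * γ = 0 by ring, Real.rpow_zero, mul_one]

section PointwiseEstimate

variable {d : ℕ} {ρ : Ed d → ℝ} {K : ℝ → Ed d → Ed d → ℝ} {f : Ed d → ℝ} {x : Ed d}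
  {θ α N CN m γ A : ℝ}

theorem setLIntegral_compl_ball_kernel_le_tsum (hCN : 0 ≤ CN) (hρx : 0 < ρ x) {t : ℝ}
    (ht : 0 < t) (hKb : ∀ y, K t x y ≤ heatKernelBound d N CN (ρ x) t (dist x y)) :
    ∫⁻ y in (Metric.ball x (ρ x))ᶜ, ENNReal.ofReal (K t x y * |f y|) ≤
      ∑' k : ℕ, ENNReal.ofReal (heatKernelBound d N CN (ρ x) t (2 ^ k * ρ x)) *
        ∫⁻ y in cube x (4 * (2 ^ k * ρ x)), ENNReal.ofReal |f y| := by
  refine setLIntegral_compl_ball_le_tsum_cube hρx (fun _ => ENNReal.ofReal_ne_top)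
    fun k y hy => ?_
  rw [← ENNReal.ofReal_mul (heatKernelBound_nonneg _ hCN hρx ht.le)]
  refine ENNReal.ofReal_le_ofReal (mul_le_mul_of_nonneg_right ?_ (abs_nonneg _))
  exact (hKb y).trans (heatKernelBound_le_of_le hCN hρx ht (by positivity) (dist_comm y x ▸ hy))

theorem lintegral_cube_mul_lintegral_le (k : ℕ) (hd : 0 < d) (hθ : 0 ≤ θ) (hA0 : 0 ≤ A)
    (hmγ : -d / 2 + m + α / 2 = γ) (hρx : 0 < ρ x) (hf : LocallyIntegrable f)
    (hA : ∫⁻ t in Ioi 0, ENNReal.ofReal (heatKernelBound d N CN (ρ x) t (2 ^ k * ρ x) *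
      t ^ (α / 2 - 1)) ≤ ENNReal.ofReal (A * (2 ^ k * ρ x) ^ (-(2 * m)) * ρ x ^ (2 * γ))) :
    (∫⁻ y in cube x (4 * (2 ^ k * ρ x)), ENNReal.ofReal |f y|) *
        ∫⁻ t in Ioi 0, ENNReal.ofReal (heatKernelBound d N CN (ρ x) t (2 ^ k * ρ x) *
          t ^ (α / 2 - 1)) ≤
      ENNReal.ofReal (8 ^ θ * 4 ^ ((d : ℝ) - α) * A * (2 ^ (θ - 2 * γ)) ^ k) *
        Mfrac ρ θ α f x := by
  set R := 2 ^ k * ρ x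
  have hw : 0 ≤ psi ρ θ x (4 * R) * ((4 * R) ^ (d : ℝ)) ^ (1 - α / d) := by
    unfold psi; positivity
  calc _ ≤ ENNReal.ofReal (psi ρ θ x (4 * R) * ((4 * R) ^ (d : ℝ)) ^ (1 - α / d)) *
        Mfrac ρ θ α f x * ENNReal.ofReal (A * R ^ (-(2 * m)) * ρ x ^ (2 * γ)) :=
      mul_le_mul' (lintegral_cube_le_Mfrac θ α hf (by positivity)
        (self_mem_cube x (by positivity)) hρx) hA
    _ = ENNReal.ofReal (A * (psi ρ θ x (4 * R) * ((4 * R) ^ (d : ℝ)) ^ (1 - α / d) *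
          (R ^ (-(2 * m)) * ρ x ^ (2 * γ)))) * Mfrac ρ θ α f x := by
      rw [mul_right_comm, ← ENNReal.ofReal_mul hw]
      ring_nf
    _ ≤ _ := by
      gcongr ENNReal.ofReal ?_ * _
      rw [Real.rpow_pow_comm zero_le_two, mul_comm _ A, mul_assoc A]
      exact mul_le_mul_of_nonneg_left (psi_mul_rpow_le hd hθ hmγ hρx (one_le_pow₀ one_le_two)) hA0

theorem lintegral_compl_ball_le_Mfrac (hd : 0 < d) (hθ : 0 ≤ θ) (hCN : 0 ≤ CN)
    (hA0 : 0 ≤ A) (hθγ : θ < 2 * γ) (hmγ : -d / 2 + m + α / 2 = γ) (hρx : 0 < ρ x)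
    (hf : LocallyIntegrable f)
    (hKb : ∀ t, 0 < t → ∀ y, K t x y ≤ heatKernelBound d N CN (ρ x) t (dist x y))
    (hA : ∀ r, 0 < r → ∫⁻ t in Ioi 0, ENNReal.ofReal (heatKernelBound d N CN (ρ x) t r *
      t ^ (α / 2 - 1)) ≤ ENNReal.ofReal (A * r ^ (-(2 * m)) * ρ x ^ (2 * γ))) :
    ∫⁻ t in Ioi 0, (∫⁻ y in (Metric.ball x (ρ x))ᶜ, ENNReal.ofReal (K t x y * |f y|)) *
        ENNReal.ofReal (t ^ (α / 2 - 1)) ≤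
      ENNReal.ofReal (8 ^ θ * 4 ^ ((d : ℝ) - α) * A * (1 - 2 ^ (θ - 2 * γ))⁻¹) *
        Mfrac ρ θ α f x := by
  set R : ℕ → ℝ := fun k => 2 ^ k * ρ x
  set J : ℕ → ℝ≥0∞ := fun k => ∫⁻ y in cube x (4 * R k), ENNReal.ofReal |f y|
  set G : ℕ → ℝ → ℝ≥0∞ := fun k t =>
    ENNReal.ofReal (heatKernelBound d N CN (ρ x) t (R k) * t ^ (α / 2 - 1))
  set B := 8 ^ θ * 4 ^ ((d : ℝ) - α) * A
  set q : ℝ := 2 ^ (θ - 2 * γ)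
  have hq : q < 1 := Real.rpow_lt_one_of_one_lt_of_neg one_lt_two (by linarith)
  have hkernel : ∀ t ∈ Ioi (0 : ℝ),
      (∫⁻ y in (Metric.ball x (ρ x))ᶜ, ENNReal.ofReal (K t x y * |f y|)) *
        ENNReal.ofReal (t ^ (α / 2 - 1)) ≤ ∑' k, J k * G k t := by
    intro t ht
    calc _ ≤ (∑' k, ENNReal.ofReal (heatKernelBound d N CN (ρ x) t (R k)) * J k) *
          ENNReal.ofReal (t ^ (α / 2 - 1)) := by
          gcongr
          exact setLIntegral_compl_ball_kernel_le_tsum hCN hρx ht (hKb t ht)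
      _ = _ := by
          rw [← ENNReal.tsum_mul_right]
          congr 1 with k
          simp only [G]
          rw [ENNReal.ofReal_mul (heatKernelBound_nonneg _ hCN hρx (le_of_lt ht))]
          ring
  have hG : ∀ k, Measurable (G k) := fun k =>
    ((measurable_heatKernelBound _ _ _ _ _).mul (measurable_id.pow_const _)).ennreal_ofReal
  calc _ ≤ ∫⁻ t in Ioi 0, ∑' k, J k * G k t := setLIntegral_mono' measurableSet_Ioi hkernel
    _ = ∑' k, J k * ∫⁻ t in Ioi 0, G k t := by
        rw [lintegral_tsum fun k => ((hG k).const_mul _).aemeasurable]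
        congr 1 with k
        exact lintegral_const_mul _ (hG k)
    _ ≤ ∑' k, ENNReal.ofReal (B * q ^ k) * Mfrac ρ θ α f x := ENNReal.tsum_le_tsum fun k =>
        lintegral_cube_mul_lintegral_le k hd hθ hA0 hmγ hρx hf (hA _ (by positivity))
    _ = _ := by
        have hq0 : 0 ≤ q := by positivity
        rw [ENNReal.tsum_mul_right, ← ENNReal.ofReal_tsum_of_nonneg (fun k => by positivity)
          ((summable_geometric_of_lt_one hq0 hq).mul_left B), tsum_mul_left,
          tsum_geometric_of_lt_one hq0 hq]

end PointwiseEstimate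

theorem stmt11_general {d : ℕ} (ρ : Ed d → ℝ) (C₀ N₀ : ℝ) (hρ : IsCriticalRadius ρ C₀ N₀)
    (α θ N CN : ℝ) (hα : 0 < α) (hαd : α < d) (hθ : 0 ≤ θ)
    (hN : (d : ℝ) - α + θ < N) (hCN : 0 < CN)
    (K : ℝ → Ed d → Ed d → ℝ)
    (hKb : ∀ t, 0 < t → ∀ x y,
      K t x y ≤ CN * t ^ (-(d : ℝ) / 2) * Real.exp (-(dist x y) ^ 2 / (5 * t)) *
        (1 + Real.sqrt t / ρ x) ^ (-N)) :
    ∃ C : ℝ, 0 < C ∧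
      ∀ f : Ed d → ℝ, LocallyIntegrable f → ∀ x : Ed d,
        (∫⁻ t in Ioi (0 : ℝ),
            (∫⁻ y in (Metric.ball x (ρ x))ᶜ, ENNReal.ofReal (K t x y * |f y|)) *
              ENNReal.ofReal (t ^ (α / 2 - 1))) ≤
          ENNReal.ofReal C * Mfrac ρ θ α f x := by
  have hd : 0 < d := by exact_mod_cast hα.trans hαd
  obtain ⟨γ, hθγ, hγN⟩ : ∃ γ, θ < 2 * γ ∧ 2 * γ < N := ⟨(θ + N) / 4, by linarith, by linarith⟩
  obtain ⟨A, hA, hAρ⟩ := exists_lintegral_heatKernelBound_mul_rpow_le (d := d) (N := N)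
    (α := α) (m := γ + (d - α) / 2) (γ := γ) hCN (by linarith) (by linarith) (by linarith) (by ring)
  have hq : (2 : ℝ) ^ (θ - 2 * γ) < 1 :=
    Real.rpow_lt_one_of_one_lt_of_neg one_lt_two (by linarith)
  refine ⟨8 ^ θ * 4 ^ ((d : ℝ) - α) * A * (1 - 2 ^ (θ - 2 * γ))⁻¹,
    by have := sub_pos.2 hq; positivity, fun f hf x => ?_⟩
  exact lintegral_compl_ball_le_Mfrac hd hθ hCN.le hA.le (by linarith) (by ring) (hρ.pos x) hf
    (fun t ht y => hKb t ht x y) (fun r hr => hAρ (ρ x) r (hρ.pos x) hr)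

/-- Estimate (3.4): the "global" part of `L^{-α/2}` is pointwise dominated by the
fractional maximal function `M_α^{ρ,θ}`, provided the kernel decay order
`N > d - α + θ`. -/
theorem stmt11 {d : ℕ} (ρ : Ed d → ℝ) (C₀ N₀ : ℝ) (hρ : IsCriticalRadius ρ C₀ N₀)
    (α θ N CN : ℝ) (hα : 0 < α) (hαd : α < d) (hθ : 0 ≤ θ)
    (hN : (d : ℝ) - α + θ < N) (hCN : 0 < CN)
    (K : ℝ → Ed d → Ed d → ℝ)
    (hKmeas : Measurable fun pp : ℝ × Ed d × Ed d => K pp.1 pp.2.1 pp.2.2)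
    (hK0 : ∀ t x y, 0 ≤ K t x y)
    (hKb : ∀ t, 0 < t → ∀ x y,
      K t x y ≤ CN * t ^ (-(d : ℝ) / 2) * Real.exp (-(dist x y) ^ 2 / (5 * t)) *
        (1 + Real.sqrt t / ρ x) ^ (-N)) :
    ∃ C : ℝ, 0 < C ∧
      ∀ f : Ed d → ℝ, LocallyIntegrable f → ∀ x : Ed d,
        (∫⁻ t in Ioi (0 : ℝ),
            (∫⁻ y in (Metric.ball x (ρ x))ᶜ, ENNReal.ofReal (K t x y * |f y|)) *
              ENNReal.ofReal (t ^ (α / 2 - 1))) ≤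
          ENNReal.ofReal C * Mfrac ρ θ α f x :=
  stmt11_general ρ C₀ N₀ hρ α θ N CN hα hαd hθ hN hCN K hKb
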